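/- arXiv:1311.6148 — 8 statements merged into one kernel-verified Lean document; each statement's English description precedes it below -/
import Mathlib

section
/- Let G be an abelian finite p-group and α an automorphism of G whose order is coprime to p. If the commutator subgroup [G,α] is cyclic, then [G,α] = [G,α^i] for every integer i such that α^i ≠ 1. -/
/-!
Put `H = [G, α]` and `β = α ^ i`, so that `[G, β] ≤ H`. Since `|β|` is prime to `p`, an element
of `[G, β]` fixed by `β` is trivial (its `|β|`-th power is its norm, which vanishes on
`[G, β]`). Hence the endomorphism `x ↦ x⁻¹ β(x)` of `H` has kernel and image meeting trivially.
Subgroups of the cyclic `p`-group `H` form a chain, so this endomorphism is either injective,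
hence onto, giving `H ≤ [G, β]`, or trivial; in the latter case `β` fixes `[G, β]` pointwise,
so `[G, β] = 1` and `β = 1`.
-/

theorem IsPGroup.eq_bot_or_eq_bot_of_inf_eq_bot {p : ℕ} [hp : Fact p.Prime] {H : Type*}
    [CommGroup H] [Finite H] [IsCyclic H] (hH : IsPGroup p H) {A B : Subgroup H}
    (hAB : A ⊓ B = ⊥) : A = ⊥ ∨ B = ⊥ := by
  have : IsCyclic (A × B) := isCyclic_of_injective (A.subtype.noncommCoprod B.subtype
    fun a b => Commute.all (a : H) b) <| (MonoidHom.noncommCoprod_injective _ _ _).mpr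
      ⟨A.subtype_injective, B.subtype_injective, by simpa [disjoint_iff] using hAB⟩
  have hcop := coprime_card_of_isCyclic_prod A B
  rcases (hH.to_subgroup A).card_eq_or_dvd with hA | hA
  · exact .inl (Subgroup.card_eq_one.mp hA)
  rcases (hH.to_subgroup B).card_eq_or_dvd with hB | hB
  · exact .inr (Subgroup.card_eq_one.mp hB)
  exact absurd ((hcop.coprime_dvd_left hA).eq_one_of_dvd hB) hp.out.one_lt.ne'

namespace MulAut

variable {G : Type*} [CommGroup G]

/-- Its range is the subgroup `[G, γ]`. -/
def commutatorHom (γ : MulAut G) : G →* G where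
  toFun g := g⁻¹ * γ g
  map_one' := by simp
  map_mul' a b := by simp only [map_mul, mul_inv_rev]; ac_rfl

@[simp]
theorem commutatorHom_apply (γ : MulAut G) (g : G) : commutatorHom γ g = g⁻¹ * γ g := rfl

theorem closure_setOf_inv_mul_apply_eq_range (γ : MulAut G) :
    Subgroup.closure {x : G | ∃ g : G, x = g⁻¹ * γ g} = (commutatorHom γ).range := by
  rw [← (commutatorHom γ).range.closure_eq]
  congr 1
  ext x
  simp [eq_comm]

theorem commutatorHom_eq_one_iff {γ : MulAut G} {g : G} : commutatorHom γ g = 1 ↔ γ g = g := by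
  rw [commutatorHom_apply, inv_mul_eq_one, eq_comm]

theorem range_commutatorHom_eq_bot_iff {γ : MulAut G} : (commutatorHom γ).range = ⊥ ↔ γ = 1 := by
  simp only [MonoidHom.range_eq_bot_iff, DFunLike.ext_iff, MonoidHom.one_apply,
    commutatorHom_eq_one_iff, one_apply]

theorem commutatorHom_mul (γ δ : MulAut G) (g : G) :
    commutatorHom (γ * δ) g = commutatorHom δ g * commutatorHom γ (δ g) := by
  simp only [commutatorHom_apply, mul_apply]
  group

theorem commutatorHom_inv (γ : MulAut G) (g : G) :
    commutatorHom γ⁻¹ g = (commutatorHom γ (γ⁻¹ g))⁻¹ := by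
  simp only [commutatorHom_apply, apply_inv_self, mul_inv_rev, inv_inv]

theorem range_commutatorHom_zpow_le (γ : MulAut G) (i : ℤ) :
    (commutatorHom (γ ^ i)).range ≤ (commutatorHom γ).range := by
  induction i using Int.induction_on with
  | zero => rw [zpow_zero, range_commutatorHom_eq_bot_iff.mpr rfl]; exact bot_le
  | succ i ih =>
    rintro _ ⟨g, rfl⟩
    rw [zpow_add_one, commutatorHom_mul]
    exact mul_mem ⟨g, rfl⟩ (ih ⟨γ g, rfl⟩)
  | pred i ih =>
    rintro _ ⟨g, rfl⟩
    rw [zpow_sub_one, commutatorHom_mul, commutatorHom_inv]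
    exact mul_mem (inv_mem ⟨γ⁻¹ g, rfl⟩) (ih ⟨γ⁻¹ g, rfl⟩)

/-- The norm `∏_{j < |γ|} γ ^ j` kills `[G, γ]` by telescoping and is `x ↦ x ^ |γ|` on
fixed points. -/
theorem pow_orderOf_eq_one_of_mem_range_commutatorHom {γ : MulAut G} {x : G}
    (hx : x ∈ (commutatorHom γ).range) (hfix : γ x = x) : x ^ orderOf γ = 1 := by
  obtain ⟨g, rfl⟩ := hx
  have hfix_pow (j : ℕ) : (γ ^ j) (commutatorHom γ g) = commutatorHom γ g := by
    induction j with
    | zero => rfl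
    | succ j ih => rw [pow_succ, mul_apply, hfix, ih]
  calc commutatorHom γ g ^ orderOf γ
      = ∏ j ∈ Finset.range (orderOf γ), (γ ^ j) (commutatorHom γ g) := by
        simp only [hfix_pow, Finset.prod_const, Finset.card_range]
    _ = ∏ j ∈ Finset.range (orderOf γ), (γ ^ (j + 1)) g / (γ ^ j) g := by
        refine Finset.prod_congr rfl fun j _ => ?_
        rw [commutatorHom_apply, map_mul, map_inv, pow_succ, mul_apply, div_eq_inv_mul]
    _ = 1 := by
        rw [Finset.prod_range_div (fun j => (γ ^ j) g), pow_orderOf_eq_one, pow_zero, div_self']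

end MulAut

namespace IsPGroup

open MulAut

variable {p : ℕ} {G : Type*} [CommGroup G]

theorem eq_one_of_mem_range_commutatorHom (hG : IsPGroup p G) {γ : MulAut G}
    (hγ : (orderOf γ).Coprime p) {x : G} (hx : x ∈ (commutatorHom γ).range) (hfix : γ x = x) :
    x = 1 :=
  orderOf_eq_one_iff.mp <| (hG.orderOf_coprime hγ.symm x).eq_one_of_dvd <|
    orderOf_dvd_of_pow_eq_one (pow_orderOf_eq_one_of_mem_range_commutatorHom hx hfix)

theorem eq_one_of_forall_apply_commutatorHom_eq (hG : IsPGroup p G) {γ : MulAut G}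
    (hγ : (orderOf γ).Coprime p) (hfix : ∀ g, γ (commutatorHom γ g) = commutatorHom γ g) :
    γ = 1 :=
  range_commutatorHom_eq_bot_iff.mp <| MonoidHom.range_eq_bot_iff.mpr <| DFunLike.ext _ _
    fun g => hG.eq_one_of_mem_range_commutatorHom hγ ⟨g, rfl⟩ (hfix g)

theorem range_commutatorHom_eq_of_le [Finite G] [Fact p.Prime] (hG : IsPGroup p G)
    {γ δ : MulAut G} [IsCyclic (commutatorHom γ).range] (hδ : (orderOf δ).Coprime p)
    (hle : (commutatorHom δ).range ≤ (commutatorHom γ).range) (hne : δ ≠ 1) :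
    (commutatorHom δ).range = (commutatorHom γ).range := by
  set H := (commutatorHom γ).range
  let φ : H →* H := ((commutatorHom δ).comp H.subtype).codRestrict H fun x => hle ⟨x, rfl⟩
  have hφ (x : H) : (φ x : G) = commutatorHom δ x := rfl
  have hdisj : φ.ker ⊓ φ.range = ⊥ := by
    rw [eq_bot_iff]
    rintro _ ⟨hker, w, rfl⟩
    refine Subgroup.mem_bot.mpr (Subtype.ext ?_)
    refine hG.eq_one_of_mem_range_commutatorHom hδ ⟨w, rfl⟩ ?_
    rw [← commutatorHom_eq_one_iff, ← hφ, φ.mem_ker.mp hker, Subgroup.coe_one]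
  rcases (hG.to_subgroup H).eq_bot_or_eq_bot_of_inf_eq_bot hdisj with hker | hrange
  · refine le_antisymm hle fun x hx => ?_
    obtain ⟨w, hw⟩ := Finite.surjective_of_injective (φ.ker_eq_bot_iff.mp hker) ⟨x, hx⟩
    exact ⟨w, congrArg Subtype.val hw⟩
  · refine absurd (hG.eq_one_of_forall_apply_commutatorHom_eq hδ fun g => ?_) hne
    have := congrArg Subtype.val
      (DFunLike.congr_fun (φ.range_eq_bot_iff.mp hrange) ⟨_, hle ⟨g, rfl⟩⟩)
    rwa [hφ, MonoidHom.one_apply, Subgroup.coe_one, commutatorHom_eq_one_iff] at this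

end IsPGroup

theorem stmt_0 (p : ℕ) [Fact p.Prime] (G : Type*) [CommGroup G] [Finite G]
    (hG : IsPGroup p G) (α : MulAut G) (hcop : (orderOf α).Coprime p)
    (hcyc : IsCyclic (Subgroup.closure {x : G | ∃ g : G, x = g⁻¹ * α g})) :
    ∀ i : ℤ, α ^ i ≠ 1 →
      Subgroup.closure {x : G | ∃ g : G, x = g⁻¹ * α g} =
        Subgroup.closure {x : G | ∃ g : G, x = g⁻¹ * (α ^ i) g} := by
  intro i hi
  rw [MulAut.closure_setOf_inv_mul_apply_eq_range] at hcyc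
  rw [MulAut.closure_setOf_inv_mul_apply_eq_range, MulAut.closure_setOf_inv_mul_apply_eq_range]
  have hcop_zpow : (orderOf (α ^ i)).Coprime p := hcop.coprime_dvd_left <|
    (Subgroup.orderOf_dvd_natCard _ (Subgroup.zpow_mem_zpowers α i)).trans
      (Nat.card_zpowers α).dvd
  exact (hG.range_commutatorHom_eq_of_le hcop_zpow
    (MulAut.range_commutatorHom_zpow_le α i) hi).symm
end

section
/- Let A and G be finite groups with gcd(|G|,|A|) = 1 and suppose A acts on G by automorphisms. If G is an abelian p-group and A acts trivially on Ω₁(G), the subgroup generated by elements of order p, then A acts trivially on G. -/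
/-!
Induction on the exponent `n` with `g ^ p ^ n = 1`. If `a` fixes `g ^ p`, the commutator
`c = (a • g) / g` satisfies `c ^ p = 1` (here commutativity is used), so `a` fixes `c` and hence
`a ^ k • g = c ^ k * g` for all `k`. Taking `k = |A|` gives `c ^ |A| = 1`, and since `c` has order
dividing `|G|`, coprimality forces `c = 1`.
-/

section MulDistribMulAction

variable {A G : Type*}

theorem smul_pow_eq_pow_mul_of_smul_eq_mul [Monoid A] [Monoid G] [MulDistribMulAction A G]
    {a : A} {g c : G} (hc : a • c = c) (hg : a • g = c * g) (k : ℕ) :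
    a ^ k • g = c ^ k * g := by
  induction k with
  | zero => simp
  | succ k ih => rw [pow_succ', mul_smul, ih, smul_mul', smul_pow', hc, hg, ← mul_assoc, ← pow_succ]

theorem eq_one_of_smul_eq_mul_of_coprime [Group A] [Group G] [MulDistribMulAction A G]
    (hcop : (Nat.card G).Coprime (Nat.card A)) {a : A} {g c : G} (hc : a • c = c)
    (hg : a • g = c * g) : c = 1 := by
  have hpow : c ^ Nat.card A = 1 := by
    have h := smul_pow_eq_pow_mul_of_smul_eq_mul hc hg (Nat.card A)
    rw [pow_card_eq_one', one_smul] at h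
    exact mul_eq_right.mp h.symm
  exact hcop.pow_left_bijective.injective (hpow.trans (one_pow _).symm)

theorem smul_eq_self_of_smul_pow_eq_self [Group A] [CommGroup G] [MulDistribMulAction A G]
    (hcop : (Nat.card G).Coprime (Nat.card A)) {p : ℕ} {a : A}
    (hfix : ∀ c : G, c ^ p = 1 → a • c = c) {g : G} (hgp : a • g ^ p = g ^ p) : a • g = g := by
  set c := a • g / g
  have hg : a • g = c * g := (div_mul_cancel _ _).symm
  have hcp : c ^ p = 1 := by rw [div_pow, ← smul_pow', hgp, div_self']
  rw [hg, eq_one_of_smul_eq_mul_of_coprime hcop (hfix c hcp) hg, one_mul]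

end MulDistribMulAction

theorem stmt_3_general (p : ℕ) (A G : Type*) [Group A]
    [CommGroup G] [MulDistribMulAction A G]
    (hG : IsPGroup p G) (hcop : (Nat.card G).Coprime (Nat.card A))
    (homega : ∀ (a : A) (g : G), g ^ p = 1 → a • g = g) :
    ∀ (a : A) (g : G), a • g = g := by
  intro a g
  obtain ⟨n, hn⟩ := hG g
  induction n generalizing g with
  | zero => rw [pow_zero, pow_one] at hn; rw [hn, smul_one]
  | succ n ih =>
    refine smul_eq_self_of_smul_pow_eq_self hcop (homega a) (ih (g ^ p) ?_)
    rw [← pow_mul, ← pow_succ', hn]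

theorem stmt_3 (p : ℕ) [Fact p.Prime] (A G : Type*) [Group A] [Finite A]
    [CommGroup G] [Finite G] [MulDistribMulAction A G]
    (hG : IsPGroup p G) (hcop : (Nat.card G).Coprime (Nat.card A))
    (homega : ∀ (a : A) (g : G), g ^ p = 1 → a • g = g) :
    ∀ (a : A) (g : G), a • g = g :=
  stmt_3_general p A G hG hcop homega
end

section
/- Let G be a finite p-group covered by m cyclic subgroups. If G contains an elementary abelian subgroup of order p², then p + 1 ≤ m. -/
/-!
Inside `J`, each `Cᵢ ∩ J` is cyclic of exponent dividing `p`, so it has order at most `p` and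
contains at most `p - 1` of the `p² - 1` nonidentity elements of `J`. Since the `Cᵢ` cover `J`,
`p² - 1 ≤ m (p - 1)`, i.e. `p + 1 ≤ m`.
-/

open Finset

theorem IsCyclic.natCard_le_of_forall_pow_eq_one {H : Type*} [Group H] [IsCyclic H] {n : ℕ}
    (hn : 0 < n) (h : ∀ x : H, x ^ n = 1) : Nat.card H ≤ n :=
  IsCyclic.exponent_eq_card (α := H) ▸
    Nat.le_of_dvd hn (Monoid.exponent_dvd_of_forall_pow_eq_one h)

theorem Subgroup.isCyclic_subgroupOf {G : Type*} [Group G] (H K : Subgroup G) [IsCyclic H] :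
    IsCyclic (H.subgroupOf K) :=
  isCyclic_of_injective ((K.subtype.comp (H.subgroupOf K).subtype).codRestrict H fun x => x.2)
    fun _ _ h => (K.subtype_injective.comp (H.subgroupOf K).subtype_injective)
      (congrArg Subtype.val h :)

theorem Subgroup.natCard_sub_one_le_of_forall_mem {G ι : Type*} [Group G] [Finite G]
    [Fintype ι] (H : ι → Subgroup G) (hcov : ∀ g, ∃ i, g ∈ H i) {k : ℕ}
    (hk : ∀ i, Nat.card (H i) ≤ k) : Nat.card G - 1 ≤ Fintype.card ι * (k - 1) := by
  classical
  have : Fintype G := Fintype.ofFinite G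
  have hcover : univ.erase 1 ⊆ univ.biUnion fun i => (H i : Set G).toFinset.erase 1 := by
    intro g hg
    obtain ⟨i, hi⟩ := hcov g
    simp only [mem_biUnion, mem_univ, true_and, mem_erase, Set.mem_toFinset, SetLike.mem_coe]
    exact ⟨i, (mem_erase.1 hg).1, hi⟩
  calc Nat.card G - 1 = (univ.erase (1 : G)).card := by
        rw [card_erase_of_mem (mem_univ _), card_univ, Nat.card_eq_fintype_card]
    _ ≤ ∑ i, ((H i : Set G).toFinset.erase 1).card :=
        (card_le_card hcover).trans card_biUnion_le
    _ ≤ ∑ _i : ι, (k - 1) := sum_le_sum fun i _ => by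
        rw [card_erase_of_mem (by simp [(H i).one_mem]), Set.toFinset_card,
          ← Nat.card_eq_fintype_card]
        exact Nat.sub_le_sub_right (hk i) 1
    _ = Fintype.card ι * (k - 1) := by simp

theorem stmt_6_general (p : ℕ) [Fact p.Prime] (G : Type*) [Group G]
    (m : ℕ) (C : Fin m → Subgroup G)
    (hcyc : ∀ i, IsCyclic (C i)) (hcov : ∀ g : G, ∃ i, g ∈ C i)
    (J : Subgroup G) (hJcard : Nat.card J = p ^ 2) (hJel : ∀ g ∈ J, g ^ p = 1) :
    p + 1 ≤ m := by
  have hp : p.Prime := Fact.out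
  have : Finite J := Nat.finite_of_card_ne_zero (by simp [hJcard, hp.ne_zero])
  have hcard : ∀ i, Nat.card ((C i).subgroupOf J) ≤ p := fun i =>
    have := hcyc i
    have := Subgroup.isCyclic_subgroupOf (C i) J
    IsCyclic.natCard_le_of_forall_pow_eq_one hp.pos fun x =>
      Subtype.ext <| Subtype.ext <| hJel _ x.1.2
  have hcount := Subgroup.natCard_sub_one_le_of_forall_mem (fun i => (C i).subgroupOf J)
    (fun g => hcov g) hcard
  rw [hJcard, Fintype.card_fin] at hcount
  have : (p + 1) * (p - 1) ≤ m * (p - 1) := by rwa [← Nat.sq_sub_sq, one_pow]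
  exact Nat.le_of_mul_le_mul_right this (Nat.sub_pos_of_lt hp.one_lt)

theorem stmt_6 (p : ℕ) [Fact p.Prime] (G : Type*) [Group G] [Finite G]
    (hG : IsPGroup p G) (m : ℕ) (C : Fin m → Subgroup G)
    (hcyc : ∀ i, IsCyclic (C i)) (hcov : ∀ g : G, ∃ i, g ∈ C i)
    (J : Subgroup G) (hJcard : Nat.card J = p ^ 2) (hJel : ∀ g ∈ J, g ^ p = 1) :
    p + 1 ≤ m :=
  stmt_6_general p G m C hcyc hcov J hJcard hJel
end

section
/- Let G be a (possibly infinite) group covered by m cyclic subgroups. Then G has a finite normal subgroup Δ whose order is bounded by a function of m only, such that G/Δ is cyclic. -/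
/-!
By B. H. Neumann's lemma one of the cyclic subgroups, say `⟨c⟩`, has index at most `m`. In the
abelian group `⟨c⟩` the centralizer of any `g` has index at most `m`: if `g x` and `g y` lie in the
same `⟨cᵢ⟩`, then `x⁻¹ y` commutes with `g`. As the `cᵢ` generate `G`, the centre has index at
most `m ^ (m + 1)`, so by Schur's theorem the derived subgroup `G'` is finite of bounded order.
The abelianization is again covered by `m` cyclic subgroups, one of index `n ≤ m`; its `n`-torsion
`T` has at most `n` elements in each of them, and `x ↦ xⁿ` maps the abelianization into that
cyclic subgroup with kernel `T`, so the quotient by `T` is cyclic. Then `Δ` is the preimage of `T`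
in `G`.
-/

open scoped commutatorElement Pointwise

theorem IsCyclic.finite_card_le_of_forall_pow_eq_one {H : Type*} [Group H] [IsCyclic H] {n : ℕ}
    (hn : n ≠ 0) (h : ∀ x : H, x ^ n = 1) : Finite H ∧ Nat.card H ≤ n := by
  have hdvd : Nat.card H ∣ n :=
    IsCyclic.exponent_eq_card (α := H) ▸ Monoid.exponent_dvd_of_forall_pow_eq_one h
  exact ⟨Nat.finite_of_card_ne_zero (ne_zero_of_dvd_ne_zero hn hdvd),
    Nat.le_of_dvd (Nat.pos_of_ne_zero hn) hdvd⟩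

theorem commutatorElement_mul_mul_of_mem_center {G : Type*} [Group G] (a b : G) {z w : G}
    (hz : z ∈ Subgroup.center G) (hw : w ∈ Subgroup.center G) : ⁅a * z, b * w⁆ = ⁅a, b⁆ := by
  have hzb : ⁅z, b * w⁆ = 1 :=
    commutatorElement_eq_one_iff_commute.mpr (Subgroup.mem_center_iff.mp hz _).symm
  have haw : ⁅a, w⁆ = 1 :=
    commutatorElement_eq_one_iff_commute.mpr (Subgroup.mem_center_iff.mp hw a)
  rw [commutatorElement_mul_left_eq_conj_mul, hzb, mul_one, mul_inv_cancel, one_mul,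
    commutatorElement_mul_right_eq_mul_conj, haw, mul_one, mul_inv_cancel_right]

namespace Subgroup

section

variable {G ι : Type*} [Group G]

theorem exists_index_le_card_of_forall_exists_mem [Fintype ι] (H : ι → Subgroup G)
    (hH : ∀ g, ∃ i, g ∈ H i) : ∃ i, (H i).FiniteIndex ∧ (H i).index ≤ Fintype.card ι := by
  classical
  have hcover : ⋃ i ∈ Finset.univ, (1 : G) • (H i : Set G) = Set.univ := by
    simpa [Set.eq_univ_iff_forall] using hH
  simpa using exists_index_le_card_of_leftCoset_cover hcover

theorem commute_of_mem_zpowers {c x y : G} (hx : x ∈ zpowers c) (hy : y ∈ zpowers c) :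
    Commute x y := by
  obtain ⟨k, rfl⟩ := mem_zpowers_iff.mp hx
  obtain ⟨l, rfl⟩ := mem_zpowers_iff.mp hy
  exact (Commute.refl c).zpow_zpow k l

theorem commute_of_mul_mem_zpowers {c g x y : G} {D : Subgroup G}
    (hD : ∀ a ∈ D, ∀ b ∈ D, Commute a b) (hx : x ∈ D) (hy : y ∈ D)
    (hgx : g * x ∈ zpowers c) (hgy : g * y ∈ zpowers c) : Commute g (x⁻¹ * y) := by
  have hw : x⁻¹ * y ∈ zpowers c := by
    simpa [mul_assoc] using mul_mem (inv_mem hgx) hgy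
  have h₁ : Commute (g * x) (x⁻¹ * y) := commute_of_mem_zpowers hgx hw
  have h₂ : Commute x⁻¹ (x⁻¹ * y) := hD _ (inv_mem hx) _ (mul_mem (inv_mem hx) hy)
  simpa using h₁.mul_left h₂

theorem relIndex_centralizer_le_card [Fintype ι] (c : ι → G) (hc : ∀ g, ∃ i, g ∈ zpowers (c i))
    {D : Subgroup G} (hD : ∀ a ∈ D, ∀ b ∈ D, Commute a b) (g : G) :
    (centralizer {g}).relIndex D ≠ 0 ∧ (centralizer {g}).relIndex D ≤ Fintype.card ι := by
  choose j hj using fun x : D => hc (g * x)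
  let J : D ⧸ (centralizer {g}).subgroupOf D → ι := fun q => j q.out
  have hJ : Function.Injective J := by
    intro q₁ q₂ h
    rw [← QuotientGroup.out_eq' q₁, ← QuotientGroup.out_eq' q₂, QuotientGroup.eq,
      mem_subgroupOf, mem_centralizer_singleton_iff]
    have := commute_of_mul_mem_zpowers hD q₁.out.2 q₂.out.2 (hj q₁.out)
      (by rw [show j q₁.out = j q₂.out from h]; exact hj q₂.out)
    simpa using this.symm.eq
  have : Finite (D ⧸ (centralizer {g}).subgroupOf D) := Finite.of_injective J hJ
  refine ⟨index_ne_zero_of_finite, ?_⟩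
  rw [relIndex, index_eq_card]
  simpa using Nat.card_le_card_of_injective J hJ

theorem iInf_centralizer_le_center (c : ι → G) (hc : ∀ g, ∃ i, g ∈ zpowers (c i)) :
    ⨅ i, centralizer {c i} ≤ center G := by
  intro z hz
  rw [mem_center_iff]
  intro g
  obtain ⟨i, hi⟩ := hc g
  obtain ⟨k, rfl⟩ := mem_zpowers_iff.mp hi
  have : Commute (c i) z := (mem_centralizer_singleton_iff.mp (mem_iInf.mp hz i)).symm
  exact (this.zpow_left k).eq

theorem index_center_le [Fintype ι] (c : ι → G) (hc : ∀ g, ∃ i, g ∈ zpowers (c i)) :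
    (center G).FiniteIndex ∧ (center G).index ≤ Fintype.card ι ^ (Fintype.card ι + 1) := by
  obtain ⟨i₀, hfin, hidx⟩ := exists_index_le_card_of_forall_exists_mem _ hc
  set D := zpowers (c i₀)
  have hrel := relIndex_centralizer_le_card c hc (D := D)
    (fun a ha b hb => commute_of_mem_zpowers ha hb)
  set E := (⨅ i, centralizer {c i}) ⊓ D
  have hE : E.index = (⨅ i, centralizer {c i}).relIndex D * D.index := by
    rw [← relIndex_mul_index inf_le_right, inf_relIndex_right]
  have hEne : E.index ≠ 0 := by
    rw [hE]
    exact mul_ne_zero (relIndex_iInf_ne_zero fun i => (hrel (c i)).1) hfin.index_ne_zero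
  have hdvd : (center G).index ∣ E.index :=
    index_dvd_of_le (inf_le_left.trans (iInf_centralizer_le_center c hc))
  refine ⟨⟨ne_zero_of_dvd_ne_zero hEne hdvd⟩, ?_⟩
  calc (center G).index ≤ E.index := Nat.le_of_dvd (Nat.pos_of_ne_zero hEne) hdvd
    _ = (⨅ i, centralizer {c i}).relIndex D * D.index := hE
    _ ≤ Fintype.card ι ^ Fintype.card ι * Fintype.card ι := by
        refine Nat.mul_le_mul ((relIndex_iInf_le _).trans ?_) hidx
        simpa using Finset.prod_le_pow_card Finset.univ _ _ fun i _ => (hrel (c i)).2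
    _ = Fintype.card ι ^ (Fintype.card ι + 1) := (pow_succ _ _).symm

theorem commutatorSet_finite_card_le (hZ : (center G).FiniteIndex) :
    Finite (commutatorSet G) ∧ Nat.card (commutatorSet G) ≤ (center G).index ^ 2 := by
  have : Finite (G ⧸ center G) := finite_quotient_of_finiteIndex
  let φ : (G ⧸ center G) × (G ⧸ center G) → commutatorSet G :=
    fun p => ⟨⁅p.1.out, p.2.out⁆, commutator_mem_commutatorSet _ _⟩
  have hφ : Function.Surjective φ := by
    rintro ⟨_, a, b, rfl⟩
    refine ⟨((a : G ⧸ center G), (b : G ⧸ center G)), Subtype.ext ?_⟩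
    obtain ⟨z, hz⟩ := QuotientGroup.mk_out_eq_mul (center G) a
    obtain ⟨w, hw⟩ := QuotientGroup.mk_out_eq_mul (center G) b
    simp only [φ, hz, hw]
    exact commutatorElement_mul_mul_of_mem_center a b z.2 w.2
  refine ⟨Finite.of_surjective φ hφ, (Nat.card_le_card_of_surjective φ hφ).trans_eq ?_⟩
  rw [Nat.card_prod, ← index_eq_card, sq]

theorem commutator_finite_card_le (hZ : (center G).FiniteIndex) {N : ℕ}
    (hN : (center G).index ≤ N) :
    Finite (_root_.commutator G) ∧ Nat.card (_root_.commutator G) ≤ N ^ (N ^ 3 + 1) := by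
  obtain ⟨hfin, hcard⟩ := commutatorSet_finite_card_le hZ
  refine ⟨inferInstance, ?_⟩
  have hpos : 0 < (center G).index := Nat.pos_of_ne_zero hZ.index_ne_zero
  calc Nat.card (_root_.commutator G)
      ≤ (center G).index ^ ((center G).index * Nat.card (commutatorSet G) + 1) :=
        Nat.le_of_dvd (pow_pos hpos _) (card_commutator_dvd_index_center_pow G)
    _ ≤ (center G).index ^ (N ^ 3 + 1) := by
        refine Nat.pow_le_pow_right hpos (Nat.add_le_add_right ?_ 1)
        rw [pow_succ']
        exact Nat.mul_le_mul hN (hcard.trans (Nat.pow_le_pow_left hN 2))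
    _ ≤ N ^ (N ^ 3 + 1) := Nat.pow_le_pow_left hN _

end

section

variable {A : Type*} [CommGroup A]

theorem ker_powMonoidHom_finite_card_le {ι : Type*} [Fintype ι] (b : ι → A)
    (hb : ∀ a, ∃ i, a ∈ zpowers (b i)) {n : ℕ} (hn : n ≠ 0) :
    Finite (powMonoidHom n : A →* A).ker ∧
      Nat.card (powMonoidHom n : A →* A).ker ≤ Fintype.card ι * n := by
  set T := (powMonoidHom n : A →* A).ker
  have hpiece (i : ι) : Finite ↥(zpowers (b i) ⊓ T) ∧ Nat.card ↥(zpowers (b i) ⊓ T) ≤ n :=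
    have : IsCyclic ↥(zpowers (b i) ⊓ T) := isCyclic_of_le inf_le_left
    IsCyclic.finite_card_le_of_forall_pow_eq_one hn fun x => Subtype.ext x.2.2
  have hT : (T : Set A) = ⋃ i, ((zpowers (b i) ⊓ T : Subgroup A) : Set A) := by
    ext a
    simp only [Set.mem_iUnion, SetLike.mem_coe, mem_inf]
    exact ⟨fun ha => (hb a).imp fun i hi => ⟨hi, ha⟩, fun ⟨_, hi⟩ => hi.2⟩
  have hfin : (T : Set A).Finite := by
    rw [hT]
    exact Set.finite_iUnion fun i => @Set.toFinite _ _ (hpiece i).1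
  refine ⟨hfin.to_subtype, ?_⟩
  calc Nat.card T = (T : Set A).ncard := (Nat.card_coe_set_eq _)
    _ ≤ ∑ i, ((zpowers (b i) ⊓ T : Subgroup A) : Set A).ncard :=
        hT ▸ Set.ncard_iUnion_le_of_fintype _
    _ ≤ ∑ _i : ι, n := Finset.sum_le_sum fun i _ =>
        (Nat.card_coe_set_eq _).symm.trans_le (hpiece i).2
    _ = Fintype.card ι * n := by simp

theorem isCyclic_quotient_ker_powMonoidHom_index (H : Subgroup A) [IsCyclic H] :
    IsCyclic (A ⧸ (powMonoidHom H.index : A →* A).ker) := by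
  have : IsCyclic (powMonoidHom H.index : A →* A).range := by
    refine isCyclic_of_le (H' := H) ?_
    rintro _ ⟨a, rfl⟩
    exact H.pow_index_mem a
  exact isCyclic_of_surjective (QuotientGroup.quotientKerEquivRange _).symm.toMonoidHom
    (MulEquiv.surjective _)

theorem exists_finite_card_le_isCyclic_quotient {ι : Type*} [Fintype ι] (b : ι → A)
    (hb : ∀ a, ∃ i, a ∈ zpowers (b i)) :
    ∃ T : Subgroup A, Finite T ∧ Nat.card T ≤ Fintype.card ι ^ 2 ∧ IsCyclic (A ⧸ T) := by
  obtain ⟨i, hfin, hidx⟩ := exists_index_le_card_of_forall_exists_mem _ hb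
  obtain ⟨hT, hcard⟩ := ker_powMonoidHom_finite_card_le b hb hfin.index_ne_zero
  refine ⟨_, hT, hcard.trans ?_, isCyclic_quotient_ker_powMonoidHom_index _⟩
  rw [sq]
  exact Nat.mul_le_mul_left _ hidx

end

section

variable {G H : Type*} [Group G] [Group H]

theorem card_comap_of_surjective {f : G →* H} (hf : Function.Surjective f) (T : Subgroup H) :
    Nat.card (T.comap f) = Nat.card f.ker * Nat.card T := by
  have hle : f.ker ≤ T.comap f := fun x hx => by
    simp [MonoidHom.mem_ker.mp hx, T.one_mem]
  calc Nat.card (T.comap f)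
      = Nat.card (f.ker.subgroupOf (T.comap f)) * f.ker.relIndex (T.comap f) :=
        (card_mul_index _).symm
    _ = Nat.card f.ker * Nat.card T := by
        rw [Nat.card_congr (subgroupOfEquivOfLe hle).toEquiv, ← MonoidHom.comap_bot,
          relIndex_comap, map_comap_eq_self_of_surjective hf, relIndex_bot_left]

theorem isCyclic_quotient_comap_of_surjective {f : G →* H} (hf : Function.Surjective f)
    (T : Subgroup H) [T.Normal] [IsCyclic (H ⧸ T)] : IsCyclic (G ⧸ T.comap f) := by
  have hker : ((QuotientGroup.mk' T).comp f).ker = T.comap f := by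
    rw [← MonoidHom.comap_ker, QuotientGroup.ker_mk']
  let e := (QuotientGroup.quotientMulEquivOfEq hker).symm.trans
    (QuotientGroup.quotientKerEquivOfSurjective _ ((QuotientGroup.mk'_surjective T).comp hf))
  exact isCyclic_of_surjective e.symm.toMonoidHom e.symm.surjective

end

end Subgroup

theorem stmt_10 :
    ∃ f : ℕ → ℕ, ∀ (G : Type) [Group G] (m : ℕ) (C : Fin m → Subgroup G),
      (∀ i, IsCyclic (C i)) → (∀ g : G, ∃ i, g ∈ C i) →
      ∃ (Δ : Subgroup G) (hΔ : Δ.Normal), Finite Δ ∧ Nat.card Δ ≤ f m ∧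
        (letI := hΔ; IsCyclic (G ⧸ Δ)) := by
  refine ⟨fun m => (m ^ (m + 1)) ^ ((m ^ (m + 1)) ^ 3 + 1) * m ^ 2, ?_⟩
  intro G _ m C hC hcov
  choose c hc using fun i => (C i).isCyclic_iff_exists_zpowers_eq_top.mp (hC i)
  have hcov' : ∀ g, ∃ i, g ∈ Subgroup.zpowers (c i) := by simpa [hc] using hcov
  obtain ⟨hZ, hZle⟩ := Subgroup.index_center_le c hcov'
  obtain ⟨_, hG'⟩ := Subgroup.commutator_finite_card_le hZ (by simpa using hZle)
  have hsurj : Function.Surjective (Abelianization.of : G →* Abelianization G) :=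
    QuotientGroup.mk_surjective
  have hcovab : ∀ a, ∃ i, a ∈ Subgroup.zpowers (Abelianization.of (c i)) := by
    intro a
    obtain ⟨g, rfl⟩ := hsurj a
    obtain ⟨i, hi⟩ := hcov' g
    exact ⟨i, Abelianization.of.map_zpowers (c i) ▸ Subgroup.mem_map_of_mem _ hi⟩
  obtain ⟨T, _, hT, _⟩ := Subgroup.exists_finite_card_le_isCyclic_quotient _ hcovab
  have hcard := Subgroup.card_comap_of_surjective hsurj T
  rw [Abelianization.ker_of] at hcard
  refine ⟨T.comap Abelianization.of, inferInstance, ?_, ?_,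
    Subgroup.isCyclic_quotient_comap_of_surjective hsurj T⟩
  · exact Nat.finite_of_card_ne_zero (hcard ▸ mul_ne_zero Nat.card_pos.ne' Nat.card_pos.ne')
  · exact hcard ▸ Nat.mul_le_mul hG' (by simpa using hT)
end

section
/- Let A and G be finite groups with gcd(|G|,|A|) = 1 and suppose A acts on G. If G is an abelian p-group, then G = C_G(A) × [G,A]. -/
/-!
The norm map `N g = ∏ a, a • g` is an endomorphism of `G` (as `G` is abelian) with image in
`C_G(A)`, acting on `C_G(A)` as `g ↦ g ^ |A|`. Since `|A|` is prime to `|G|`, taking `|A|`-th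
powers is a bijection of `G`, and `g ^ |A| ∈ H` forces `g ∈ H` for every subgroup `H`; so
`G = C_G(A) × ker N`. Finally `ker N = [G, A]`: each `g⁻¹ (a • g)` lies in `ker N`, and
conversely if `N g = 1` then `g ^ |A| = ∏ a, g (a • g)⁻¹ ∈ [G, A]`, whence `g ∈ [G, A]`.
-/

open Finset

theorem Subgroup.mem_of_pow_mem_of_coprime {G : Type*} [Group G] [Finite G] {H : Subgroup G}
    {n : ℕ} (hn : (Nat.card G).Coprime n) {g : G} (hg : g ^ n ∈ H) : g ∈ H := by
  obtain ⟨m, hm⟩ := exists_pow_eq_self_of_coprime (x := g)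
    (hn.coprime_dvd_left (_root_.orderOf_dvd_natCard g)).symm
  exact hm ▸ H.pow_mem hg m

namespace MulDistribMulAction

variable (A G : Type*) [Group A] [CommGroup G] [MulDistribMulAction A G]

/-- The subgroup `[G, A]`. -/
def actionCommutator : Subgroup G :=
  Subgroup.closure {x : G | ∃ (g : G) (a : A), x = g⁻¹ * a • g}

variable {A G} in
theorem inv_mul_smul_mem_actionCommutator (g : G) (a : A) :
    g⁻¹ * a • g ∈ actionCommutator A G :=
  Subgroup.subset_closure ⟨g, a, rfl⟩

variable [Fintype A]

def norm : G →* G where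
  toFun g := ∏ a : A, a • g
  map_one' := by simp
  map_mul' x y := by simp only [smul_mul', prod_mul_distrib]

variable {A G}

theorem norm_apply (g : G) : norm A G g = ∏ a : A, a • g := rfl

theorem norm_mem_fixedPoints (g : G) : norm A G g ∈ FixedPoints.subgroup A G := by
  intro b
  change b • ∏ a : A, a • g = ∏ a : A, a • g
  rw [smul_prod']
  simp_rw [smul_smul]
  exact Equiv.prod_comp (Equiv.mulLeft b) (· • g)

theorem norm_smul (b : A) (g : G) : norm A G (b • g) = norm A G g := by
  simp_rw [norm_apply, smul_smul]
  exact Equiv.prod_comp (Equiv.mulRight b) (· • g)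

theorem norm_of_mem_fixedPoints {g : G} (hg : g ∈ FixedPoints.subgroup A G) :
    norm A G g = g ^ Fintype.card A := by
  simp [norm_apply, show ∀ a : A, a • g = g from hg]

theorem actionCommutator_le_ker_norm : actionCommutator A G ≤ (norm A G).ker := by
  rw [actionCommutator, Subgroup.closure_le]
  rintro _ ⟨g, a, rfl⟩
  simp [norm_smul]

theorem pow_card_mul_inv_norm_mem_actionCommutator (g : G) :
    g ^ Fintype.card A * (norm A G g)⁻¹ ∈ actionCommutator A G := by
  have h : g ^ Fintype.card A * (norm A G g)⁻¹ = ∏ a : A, (g⁻¹ * a • g)⁻¹ := by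
    simp [norm_apply, prod_mul_distrib, mul_comm]
  rw [h]
  exact Subgroup.prod_mem _ fun a _ => inv_mem (inv_mul_smul_mem_actionCommutator g a)

variable [Finite G]

theorem ker_norm_le_actionCommutator (hcop : (Nat.card G).Coprime (Fintype.card A)) :
    (norm A G).ker ≤ actionCommutator A G := by
  intro g hg
  apply Subgroup.mem_of_pow_mem_of_coprime hcop
  simpa [(norm A G).mem_ker.mp hg] using pow_card_mul_inv_norm_mem_actionCommutator (A := A) g

theorem ker_norm_eq_actionCommutator (hcop : (Nat.card G).Coprime (Fintype.card A)) :
    (norm A G).ker = actionCommutator A G :=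
  le_antisymm (ker_norm_le_actionCommutator hcop) actionCommutator_le_ker_norm

theorem isCompl_fixedPoints_ker_norm (hcop : (Nat.card G).Coprime (Fintype.card A)) :
    IsCompl (FixedPoints.subgroup A G) (norm A G).ker := by
  constructor
  · rw [Subgroup.disjoint_def]
    intro x hxC hxK
    refine hcop.pow_left_bijective.injective ?_
    rw [one_pow, ← norm_of_mem_fixedPoints hxC, (norm A G).mem_ker.mp hxK]
  · rw [codisjoint_iff_le_sup]
    intro g _
    obtain ⟨c, hc : c ^ Fintype.card A = norm A G g⟩ :=
      hcop.pow_left_bijective.surjective (norm A G g)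
    have hcC : c ∈ FixedPoints.subgroup A G :=
      Subgroup.mem_of_pow_mem_of_coprime hcop (hc ▸ norm_mem_fixedPoints g)
    have hker : c⁻¹ * g ∈ (norm A G).ker := by
      rw [MonoidHom.mem_ker, map_mul, map_inv, norm_of_mem_fixedPoints hcC, hc, inv_mul_cancel]
    simpa using Subgroup.mul_mem_sup hcC hker

end MulDistribMulAction

open MulDistribMulAction in
theorem stmt_13_general (A G : Type*) [Group A] [Finite A]
    [CommGroup G] [Finite G] [MulDistribMulAction A G]
    (hcop : (Nat.card G).Coprime (Nat.card A)) :
    IsCompl (FixedPoints.subgroup A G)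
      (Subgroup.closure {x : G | ∃ (g : G) (a : A), x = g⁻¹ * a • g}) := by
  have := Fintype.ofFinite A
  rw [Nat.card_eq_fintype_card (α := A)] at hcop
  have hcompl := isCompl_fixedPoints_ker_norm hcop
  rwa [ker_norm_eq_actionCommutator hcop] at hcompl

theorem stmt_13 (p : ℕ) [Fact p.Prime] (A G : Type*) [Group A] [Finite A]
    [CommGroup G] [Finite G] [MulDistribMulAction A G]
    (hG : IsPGroup p G) (hcop : (Nat.card G).Coprime (Nat.card A)) :
    IsCompl (FixedPoints.subgroup A G)
      (Subgroup.closure {x : G | ∃ (g : G) (a : A), x = g⁻¹ * a • g}) :=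
  stmt_13_general A G hcop
end

section
/- Let G be a finite group acting by automorphisms on a finite group H with gcd(|G|,|H|) = 1 (coprime action). Then [H,G,G] = [H,G]. -/
/-!
Write `K = [H, G]`; only `K ≤ [K, G]` needs proof. The elements `g` with `k⁻¹ * g • k ∈ [K, G]`
for all `k` form a subgroup of `G`, so it suffices to treat a Sylow `p`-subgroup `P` with
`p ∣ |G|`. Since `g • k ∈ k * K`, the coset `k * K` is `P`-stable, and its size `|K|` is prime
to `p` by coprimality. Hence `P` fixes some `k * c` with `c ∈ K`, and then
`k⁻¹ * g • k = c * g • c⁻¹ ∈ [K, G]` for every `g ∈ P`.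
-/

namespace Subgroup

lemma eq_top_of_forall_sylow_le {G : Type*} [Group G] [Finite G] (A : Subgroup G)
    (hA : ∀ (p : ℕ) [Fact p.Prime], p ∣ Nat.card G → ∀ P : Sylow p G, (P : Subgroup G) ≤ A) :
    A = ⊤ := by
  rw [← index_eq_one, Nat.eq_one_iff_not_exists_prime_dvd]
  intro p hp hpA
  have : Fact p.Prime := ⟨hp⟩
  have hpG : p ∣ Nat.card G := hpA.trans A.index_dvd_card
  obtain ⟨P⟩ := Sylow.nonempty (p := p) (G := G)
  exact P.not_dvd_index (hpA.trans (index_dvd_of_le (hA p hpG P)))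

open scoped Pointwise

variable {G H : Type*} [Group G] [Group H] [MulDistribMulAction G H]

/-- The subgroup `[K, G]`. -/
def actionCommutator (G : Type*) [Group G] [MulDistribMulAction G H] (K : Subgroup H) :
    Subgroup H :=
  closure {x | ∃ h ∈ K, ∃ g : G, x = h⁻¹ * g • h}

lemma actionCommutator_mono {K L : Subgroup H} (hKL : K ≤ L) :
    actionCommutator G K ≤ actionCommutator G L :=
  closure_mono fun _ ⟨h, hh, g, hx⟩ => ⟨h, hKL hh, g, hx⟩

lemma smul_mem_closure {S : Set H} (hS : ∀ g : G, ∀ x ∈ S, g • x ∈ S) (g : G) {x : H}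
    (hx : x ∈ closure S) : g • x ∈ closure S :=
  (closure_le ((closure S).comap (MulDistribMulAction.toMonoidHom H g))).2
    (fun y hy => subset_closure (hS g y hy)) hx

lemma smul_mem_actionCommutator {K : Subgroup H} (hK : ∀ g : G, ∀ x ∈ K, g • x ∈ K) (g : G)
    {x : H} (hx : x ∈ actionCommutator G K) : g • x ∈ actionCommutator G K := by
  refine smul_mem_closure ?_ g hx
  rintro g x ⟨h, hh, g', rfl⟩
  refine ⟨g • h, hK g h hh, g * g' * g⁻¹, ?_⟩
  rw [smul_mul', smul_inv', mul_smul, mul_smul, inv_smul_smul]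

def actsTriviallyModulo (G : Type*) [Group G] [MulDistribMulAction G H] (T : Subgroup H) :
    Subgroup G where
  carrier := {g | ∀ h : H, h⁻¹ * g • h ∈ T}
  one_mem' h := by simp
  mul_mem' {a b} ha hb h := by
    have hab : h⁻¹ * (a * b) • h = (h⁻¹ * b • h) * ((b • h)⁻¹ * a • (b • h)) := by
      rw [mul_smul]; group
    exact hab ▸ T.mul_mem (hb h) (ha (b • h))
  inv_mem' {a} ha h := by
    have ha' : h⁻¹ * a⁻¹ • h = ((a⁻¹ • h)⁻¹ * a • (a⁻¹ • h))⁻¹ := by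
      rw [smul_inv_smul]; group
    exact ha' ▸ T.inv_mem (ha (a⁻¹ • h))

lemma actionCommutator_top_le_iff {T : Subgroup H} :
    actionCommutator G ⊤ ≤ T ↔ actsTriviallyModulo G T = ⊤ := by
  rw [actionCommutator, closure_le, eq_top_iff]
  constructor
  · exact fun hT g _ h => hT ⟨h, mem_top h, g, rfl⟩
  · rintro hT _ ⟨h, -, g, rfl⟩
    exact hT (mem_top g) h

lemma exists_fixed_mem_leftCoset {p : ℕ} [Fact p.Prime] {P : Subgroup G}
    (hP : IsPGroup p P) {K : Subgroup H} (hK : ∀ g : G, ∀ x ∈ K, g • x ∈ K)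
    (hPK : P ≤ actsTriviallyModulo G K) (hpK : ¬ p ∣ Nat.card K) (k : H) :
    ∃ c ∈ K, ∀ g ∈ P, g • (k * c) = k * c := by
  let coset : SubMulAction P H :=
    { carrier := k • (K : Set H)
      smul_mem' := by
        rintro g _ ⟨c, hc, rfl⟩
        refine ⟨(k⁻¹ * (g : G) • k) * (g : G) • c, K.mul_mem (hPK g.2 k) (hK g c hc), ?_⟩
        change k * (k⁻¹ * (g : G) • k * (g : G) • c) = (g : G) • (k * c)
        rw [smul_mul', mul_assoc, mul_inv_cancel_left] }
  have hcard : ¬ p ∣ Nat.card coset := by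
    change ¬ p ∣ Nat.card ↥(k • (K : Set H))
    rwa [Set.natCard_smul_set]
  obtain ⟨⟨_, c, hc, rfl⟩, hfix⟩ := hP.nonempty_fixed_point_of_prime_not_dvd_card coset hcard
  exact ⟨c, hc, fun g hg => congrArg Subtype.val (hfix ⟨g, hg⟩)⟩

lemma le_actsTriviallyModulo_actionCommutator {p : ℕ} [Fact p.Prime]
    {P : Subgroup G} (hP : IsPGroup p P) {K : Subgroup H} (hK : ∀ g : G, ∀ x ∈ K, g • x ∈ K)
    (hPK : P ≤ actsTriviallyModulo G K) (hpK : ¬ p ∣ Nat.card K) :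
    P ≤ actsTriviallyModulo G (actionCommutator G K) := by
  intro g hg k
  obtain ⟨c, hc, hfix⟩ := exists_fixed_mem_leftCoset hP hK hPK hpK k
  have hk : k⁻¹ * g • k = c⁻¹⁻¹ * g • c⁻¹ := by
    have := hfix g hg
    rw [smul_mul'] at this
    rw [smul_inv', eq_mul_inv_iff_mul_eq.mpr this]
    group
  exact hk ▸ subset_closure ⟨c⁻¹, K.inv_mem hc, g, rfl⟩

theorem actionCommutator_actionCommutator_top_of_coprime [Finite G]
    (hcop : (Nat.card G).Coprime (Nat.card H)) :
    actionCommutator G (actionCommutator G (⊤ : Subgroup H)) = actionCommutator G ⊤ := by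
  set K := actionCommutator G (⊤ : Subgroup H)
  refine le_antisymm (actionCommutator_mono le_top) ?_
  rw [actionCommutator_top_le_iff]
  refine eq_top_of_forall_sylow_le _ fun p _ hpG P => ?_
  have hpK : ¬ p ∣ Nat.card K := fun hpK =>
    Nat.Prime.one_lt Fact.out |>.ne' <|
      Nat.eq_one_of_dvd_coprimes hcop hpG (hpK.trans K.card_subgroup_dvd_card)
  have hPK : (P : Subgroup G) ≤ actsTriviallyModulo G K := by
    rw [actionCommutator_top_le_iff.mp le_rfl]
    exact le_top
  exact le_actsTriviallyModulo_actionCommutator P.isPGroup'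
    (smul_mem_actionCommutator fun _ _ _ => mem_top _) hPK hpK

end Subgroup

open Subgroup in
theorem stmt_15_general (G H : Type*) [Group G] [Finite G] [Group H]
    [MulDistribMulAction G H] (hcop : (Nat.card G).Coprime (Nat.card H)) :
    Subgroup.closure {x : H | ∃ h ∈ Subgroup.closure {y : H | ∃ (k : H) (g : G), y = k⁻¹ * g • k},
        ∃ g : G, x = h⁻¹ * g • h} =
      Subgroup.closure {y : H | ∃ (k : H) (g : G), y = k⁻¹ * g • k} := by
  have hHG : closure {y : H | ∃ (k : H) (g : G), y = k⁻¹ * g • k} = actionCommutator G ⊤ := by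
    simp [actionCommutator]
  rw [hHG]
  exact actionCommutator_actionCommutator_top_of_coprime hcop

theorem stmt_15 (G H : Type*) [Group G] [Finite G] [Group H] [Finite H]
    [MulDistribMulAction G H] (hcop : (Nat.card G).Coprime (Nat.card H)) :
    Subgroup.closure {x : H | ∃ h ∈ Subgroup.closure {y : H | ∃ (k : H) (g : G), y = k⁻¹ * g • k},
        ∃ g : G, x = h⁻¹ * g • h} =
      Subgroup.closure {y : H | ∃ (k : H) (g : G), y = k⁻¹ * g • k} :=
  stmt_15_general G H hcop
end

section
/- Let G be a finite group in which every nontrivial element x generates a cyclic subgroup having at most m conjugates (equivalently, the index of the normalizer of ⟨x⟩ in G is at most m for all x ∈ G). Let N be the intersection of the normalizers of all cyclic subgroups of G. Then N is nilpotent of class at most 2. -/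
/-!
An element normalizing `⟨x⟩` acts on `x` as a power map `x ↦ x ^ i`, and power maps commute.
Hence conjugation by `a * b` and by `b * a` agree on `x` whenever `a` and `b` both normalize `⟨x⟩`,
so `⁅a, b⁆` centralizes `x`. Applied to all `x`, the commutator of two elements of the norm is
central in `G`, a fortiori it commutes with every element of the norm.
-/

open scoped commutatorElement

open Subgroup

section

variable {G : Type*} [Group G] {a b x : G}

theorem exists_conj_eq_zpow_of_mem_normalizer_zpowers (ha : a ∈ normalizer (zpowers x : Set G)) :
    ∃ i : ℤ, a * x * a⁻¹ = x ^ i :=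
  mem_zpowers_iff.mp ((mem_normalizer_iff.mp ha x).mp (mem_zpowers x)) |>.imp fun _ h => h.symm

theorem conj_mul_eq_conj_mul_swap_of_mem_normalizer_zpowers
    (ha : a ∈ normalizer (zpowers x : Set G)) (hb : b ∈ normalizer (zpowers x : Set G)) :
    a * b * x * (a * b)⁻¹ = b * a * x * (b * a)⁻¹ := by
  obtain ⟨i, hi⟩ := exists_conj_eq_zpow_of_mem_normalizer_zpowers ha
  obtain ⟨j, hj⟩ := exists_conj_eq_zpow_of_mem_normalizer_zpowers hb
  calc a * b * x * (a * b)⁻¹ = a * (b * x * b⁻¹) * a⁻¹ := by group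
    _ = (a * x * a⁻¹) ^ j := by rw [hj, conj_zpow]
    _ = (b * x * b⁻¹) ^ i := by rw [hi, hj, ← zpow_mul, ← zpow_mul, mul_comm]
    _ = b * (a * x * a⁻¹) * b⁻¹ := by rw [hi, conj_zpow]
    _ = b * a * x * (b * a)⁻¹ := by group

theorem commute_commutatorElement_of_mem_normalizer_zpowers
    (ha : a ∈ normalizer (zpowers x : Set G)) (hb : b ∈ normalizer (zpowers x : Set G)) :
    Commute ⁅a, b⁆ x := by
  have h := conj_mul_eq_conj_mul_swap_of_mem_normalizer_zpowers (inv_mem ha) (inv_mem hb)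
  calc ⁅a, b⁆ * x = a * b * (a⁻¹ * b⁻¹ * x * (a⁻¹ * b⁻¹)⁻¹) * (a⁻¹ * b⁻¹) := by
        rw [commutatorElement_def]; group
    _ = a * b * (b⁻¹ * a⁻¹ * x * (b⁻¹ * a⁻¹)⁻¹) * (a⁻¹ * b⁻¹) := by rw [h]
    _ = x * ⁅a, b⁆ := by rw [commutatorElement_def]; group

end

theorem stmt_16_general (G : Type*) [Group G]
    (N : Subgroup G) (hN : N = ⨅ x : G, Subgroup.normalizer (Subgroup.zpowers x : Set G)) :
    ∀ a ∈ N, ∀ b ∈ N, ∀ c ∈ N, ⁅⁅a, b⁆, c⁆ = 1 := by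
  intro a ha b hb c _
  have normalizes_c : N ≤ normalizer (zpowers c : Set G) := hN ▸ iInf_le _ c
  exact commutatorElement_eq_one_iff_commute.mpr
    (commute_commutatorElement_of_mem_normalizer_zpowers (normalizes_c ha) (normalizes_c hb))

theorem stmt_16 (G : Type*) [Group G] [Finite G] (m : ℕ)
    (hm : ∀ x : G, x ≠ 1 → (Subgroup.normalizer (Subgroup.zpowers x : Set G)).index ≤ m)
    (N : Subgroup G) (hN : N = ⨅ x : G, Subgroup.normalizer (Subgroup.zpowers x : Set G)) :
    ∀ a ∈ N, ∀ b ∈ N, ∀ c ∈ N, ⁅⁅a, b⁆, c⁆ = 1 :=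
  stmt_16_general G N hN
end

section
/- Let G be a finite group and suppose subgroups K ≤ H ≤ G satisfy: K is normal in G, K is abelian, H = ⟨x₁,...,x_m⟩ for elements x_i, K has index t in H, and for each i the subgroup K⟨x_i⟩ is nilpotent of class at most 2. Then K^t ≤ Z(H), where K^t = {k^t : k ∈ K}. -/
/-!
If `⁅a, b⁆` commutes with `a` and `b`, then `⁅a ^ n, b⁆ = ⁅a, b⁆ ^ n = ⁅a, b ^ n⁆`. For `k ∈ K` and a
generator `x = x i`, this applies inside the class-2 group `K ⟨x⟩`; as `K` is normal of index `t`
in `H`, `x ^ t ∈ K`, so `⁅k, x ^ t⁆ = 1` since `K` is abelian, and hence `⁅k ^ t, x⁆ = 1`. An element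
commuting with every generator of `H` commutes with all of `H`.
-/

open scoped commutatorElement

section CommutatorPow

variable {G : Type*} [Group G] {a b : G}

theorem commutatorElement_pow_left_of_commute (h : Commute ⁅a, b⁆ a) (n : ℕ) :
    ⁅a ^ n, b⁆ = ⁅a, b⁆ ^ n := by
  induction n with
  | zero => simp
  | succ n ih =>
    rw [pow_succ', commutatorElement_mul_left_eq_conj_mul, ih, ← (h.pow_left n).eq,
      mul_inv_cancel_right, pow_succ]

theorem commutatorElement_pow_right_of_commute (h : Commute ⁅a, b⁆ b) (n : ℕ) :
    ⁅a, b ^ n⁆ = ⁅a, b⁆ ^ n := by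
  induction n with
  | zero => simp
  | succ n ih =>
    rw [pow_succ', commutatorElement_mul_right_eq_mul_conj, ih, mul_assoc _ b,
      ← (h.pow_left n).eq, mul_assoc, mul_inv_cancel_right, pow_succ']

theorem Commute.pow_left_of_pow_right_of_commute_commutatorElement
    (ha : Commute ⁅a, b⁆ a) (hb : Commute ⁅a, b⁆ b) {n : ℕ} (h : Commute a (b ^ n)) :
    Commute (a ^ n) b := by
  rw [← commutatorElement_eq_one_iff_commute, commutatorElement_pow_left_of_commute ha,
    ← commutatorElement_pow_right_of_commute hb, commutatorElement_eq_one_iff_commute.mpr h]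

end CommutatorPow

theorem stmt_17_general (G : Type*) [Group G] (K H : Subgroup G)
    (hKnorm : K.Normal) (hKab : ∀ a ∈ K, ∀ b ∈ K, a * b = b * a)
    (m : ℕ) (x : Fin m → G) (hgen : H = Subgroup.closure (Set.range x))
    (t : ℕ) (ht : (K.subgroupOf H).index = t)
    (hnil : ∀ i, ∀ a ∈ K ⊔ Subgroup.zpowers (x i), ∀ b ∈ K ⊔ Subgroup.zpowers (x i),
      ∀ c ∈ K ⊔ Subgroup.zpowers (x i), ⁅⁅a, b⁆, c⁆ = 1) :
    ∀ k ∈ K, ∀ h ∈ H, k ^ t * h = h * k ^ t := by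
  intro k hk h hh
  have hgen_pow_mem : ∀ i, x i ^ t ∈ K := fun i ↦
    ht ▸ K.pow_relIndex_mem (hgen ▸ Subgroup.subset_closure ⟨i, rfl⟩)
  have hgen_commute : ∀ i, Commute (k ^ t) (x i) := fun i ↦ by
    have hkN : k ∈ K ⊔ Subgroup.zpowers (x i) := Subgroup.mem_sup_left hk
    have hxN : x i ∈ K ⊔ Subgroup.zpowers (x i) :=
      Subgroup.mem_sup_right (Subgroup.mem_zpowers _)
    exact Commute.pow_left_of_pow_right_of_commute_commutatorElement
      (commutatorElement_eq_one_iff_commute.mp (hnil i _ hkN _ hxN _ hkN))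
      (commutatorElement_eq_one_iff_commute.mp (hnil i _ hkN _ hxN _ hxN))
      (hKab _ hk _ (hgen_pow_mem i))
  have hH : H ≤ Subgroup.centralizer {k ^ t} := by
    rw [hgen, Subgroup.closure_le]
    rintro _ ⟨i, rfl⟩
    exact Subgroup.mem_centralizer_singleton_iff.mpr (hgen_commute i).eq.symm
  exact (Subgroup.mem_centralizer_singleton_iff.mp (hH hh)).symm

theorem stmt_17 (G : Type*) [Group G] [Finite G] (K H : Subgroup G)
    (hKH : K ≤ H) (hKnorm : K.Normal) (hKab : ∀ a ∈ K, ∀ b ∈ K, a * b = b * a)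
    (m : ℕ) (x : Fin m → G) (hgen : H = Subgroup.closure (Set.range x))
    (t : ℕ) (ht : (K.subgroupOf H).index = t)
    (hnil : ∀ i, ∀ a ∈ K ⊔ Subgroup.zpowers (x i), ∀ b ∈ K ⊔ Subgroup.zpowers (x i),
      ∀ c ∈ K ⊔ Subgroup.zpowers (x i), ⁅⁅a, b⁆, c⁆ = 1) :
    ∀ k ∈ K, ∀ h ∈ H, k ^ t * h = h * k ^ t :=
  stmt_17_general G K H hKnorm hKab m x hgen t ht hnil
end
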